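/- Let R be a semiprime ring and n ≥ 2 a natural number. Then R is central reduced if and only if the quotient ring R[x]/(xⁿ) is central linear Armendariz, where (xⁿ) is the ideal of R[x] generated by xⁿ. -/

import Mathlib

open Polynomial

/-- A ring `R` is *central linear Armendariz* if whenever the product of two linear
polynomials `(a₀ + a₁x)(b₀ + b₁x) = 0` in `R[x]`, each product `aᵢbⱼ` is central in `R`. -/
def CentralLinearArmendariz (R : Type*) [Ring R] : Prop :=
  ∀ a₀ a₁ b₀ b₁ : R,
    (C a₀ + C a₁ * X) * (C b₀ + C b₁ * X) = 0 →
      a₀ * b₀ ∈ Set.center R ∧ a₀ * b₁ ∈ Set.center R ∧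
      a₁ * b₀ ∈ Set.center R ∧ a₁ * b₁ ∈ Set.center R

/-- A ring `R` is *linear Armendariz* if whenever the product of two linear
polynomials `(a₀ + a₁x)(b₀ + b₁x) = 0` in `R[x]`, each product `aᵢbⱼ` is zero. -/
def LinearArmendariz (R : Type*) [Ring R] : Prop :=
  ∀ a₀ a₁ b₀ b₁ : R,
    (C a₀ + C a₁ * X) * (C b₀ + C b₁ * X) = 0 →
      a₀ * b₀ = 0 ∧ a₀ * b₁ = 0 ∧ a₁ * b₀ = 0 ∧ a₁ * b₁ = 0

/-- A ring `R` is *Armendariz* if whenever `f g : R[x]` satisfy `f * g = 0`,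
every product of a coefficient of `f` with a coefficient of `g` is zero. -/
def Armendariz (R : Type*) [Ring R] : Prop :=
  ∀ f g : R[X], f * g = 0 → ∀ i j : ℕ, f.coeff i * g.coeff j = 0

/-!
Under semiprimeness, central reduced means reduced: a central `x` with `x² = 0` satisfies
`x r x = r x² = 0`. Over a reduced ring, the Armendariz argument run one antidiagonal at a time
shows that `f g ∈ (xⁿ)` forces `fᵢ gⱼ = 0` for all `i + j < n`; applied to `AC`, `BD` and
`(A + B)(C + D)`, together with `(ad)² = -a(db)c = 0`, it makes `R[x]/(xⁿ)` linear Armendariz.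
Conversely, if `x² = 0` and `ε = xⁿ⁻¹`, then `(x + (x - ε)y)(x + (x + ε)y) = 0` over `R[x]/(xⁿ)`,
so `x ε` is central there, which makes `x` central in `R`, hence `x = 0`.
-/

namespace IsReduced

variable {R : Type*} [Ring R] [IsReduced R]

theorem eq_zero_of_mul_self_eq_zero {x : R} (hx : x * x = 0) : x = 0 :=
  IsReduced.eq_zero x ⟨2, by rw [sq, hx]⟩

theorem mul_eq_zero_symm {a b : R} (h : a * b = 0) : b * a = 0 :=
  eq_zero_of_mul_self_eq_zero <| by rw [mul_assoc, ← mul_assoc a, h, zero_mul, mul_zero]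

theorem mul_eq_zero_of_add_mul_add_eq_zero {a b c d : R} (hac : a * c = 0) (hbd : b * d = 0)
    (h : (a + b) * (c + d) = 0) : a * d = 0 ∧ b * c = 0 := by
  have hsum : a * d = -(b * c) := by
    rw [eq_neg_iff_add_eq_zero, ← h]; noncomm_ring; rw [hac, hbd]; abel
  have had : a * d = 0 := eq_zero_of_mul_self_eq_zero <|
    calc a * d * (a * d) = a * d * -(b * c) := by rw [← hsum]
      _ = -(a * (d * b) * c) := by noncomm_ring
      _ = 0 := by rw [mul_eq_zero_symm hbd, mul_zero, zero_mul, neg_zero]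
  exact ⟨had, neg_eq_zero.mp (hsum ▸ had)⟩

end IsReduced

section Semiprime

variable {R : Type*} [Ring R]

theorem eq_zero_of_mul_self_eq_zero_of_mem_center
    (hsp : ∀ a : R, (∀ r : R, a * r * a = 0) → a = 0) {x : R} (hx : x * x = 0)
    (hc : x ∈ Set.center R) : x = 0 :=
  hsp x fun r => by rw [mul_assoc, Semigroup.mem_center_iff.mp hc, ← mul_assoc, hx, zero_mul]

theorem isReduced_iff_of_semiprime (hsp : ∀ a : R, (∀ r : R, a * r * a = 0) → a = 0) :
    IsReduced R ↔ ∀ x : R, x * x = 0 → x ∈ Set.center R :=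
  ⟨fun _ _ hx => IsReduced.eq_zero_of_mul_self_eq_zero hx ▸ Set.zero_mem_center,
    fun h => (isReduced_iff_pow_one_lt 2 one_lt_two).2 fun x hx =>
      eq_zero_of_mul_self_eq_zero_of_mem_center hsp (sq x ▸ hx) (h x (sq x ▸ hx))⟩

end Semiprime

namespace Polynomial

open Finset

variable {R : Type*} [Ring R]

theorem X_pow_mem_center (n : ℕ) : (X ^ n : R[X]) ∈ Set.center R[X] :=
  Semigroup.mem_center_iff.mpr fun _ => X_pow_mul.symm

theorem linear_mul_linear_eq_zero_iff {a₀ a₁ b₀ b₁ : R} :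
    (C a₀ + C a₁ * X) * (C b₀ + C b₁ * X) = 0 ↔
      a₀ * b₀ = 0 ∧ a₀ * b₁ + a₁ * b₀ = 0 ∧ a₁ * b₁ = 0 := by
  have hexp : (C a₀ + C a₁ * X) * (C b₀ + C b₁ * X) =
      C (a₀ * b₀) + C (a₀ * b₁ + a₁ * b₀) * X + C (a₁ * b₁) * X ^ 2 := by
    have h₀ : X * C b₀ = C b₀ * X := X_mul
    have h₁ : X * C b₁ = C b₁ * X := X_mul
    calc (C a₀ + C a₁ * X) * (C b₀ + C b₁ * X)
        = C a₀ * C b₀ + C a₀ * C b₁ * X + C a₁ * (X * C b₀) + C a₁ * (X * C b₁) * X := by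
          noncomm_ring
      _ = _ := by rw [h₀, h₁]; simp only [C_add, C_mul]; noncomm_ring
  rw [hexp]
  refine ⟨fun h => ?_, fun ⟨h₀, h₁, h₂⟩ => by rw [h₀, h₁, h₂]; simp⟩
  have hk (k : ℕ) := congrArg (coeff · k) h
  simp only [coeff_add, coeff_C_mul_X_pow, coeff_C_mul_X, coeff_C, coeff_zero] at hk
  exact ⟨by simpa using hk 0, by simpa using hk 1, by simpa using hk 2⟩

theorem _root_.Commute.linear_mul_linear_eq_zero {a e : R} (hae : Commute a e)
    (ha : a * a = 0) (he : e * e = 0) :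
    (C a + C (a - e) * X) * (C a + C (a + e) * X) = 0 :=
  linear_mul_linear_eq_zero_iff.mpr ⟨ha, by rw [mul_add, sub_mul, ha, hae.eq]; abel,
    by rw [sub_mul, mul_add, mul_add, ha, he, hae.eq]; abel⟩

theorem coeff_mul_eq_zero_of_forall {f g : R[X]} {k : ℕ}
    (h : ∀ i j, i + j = k → f.coeff i * g.coeff j = 0) : (f * g).coeff k = 0 := by
  rw [coeff_mul]
  exact sum_eq_zero fun p hp => h p.1 p.2 (mem_antidiagonal.mp hp)

variable [IsReduced R]

/-- By induction on `i`: multiplying the vanishing `s`-th coefficient of `f g` on the right by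
`f.coeff i` kills every term but `f.coeff i * g.coeff (s - i) * f.coeff i`. -/
theorem coeff_mul_coeff_eq_zero_of_coeff_mul_eq_zero {f g : R[X]} {s : ℕ}
    (hs : (f * g).coeff s = 0) (hlow : ∀ i j, i + j < s → f.coeff i * g.coeff j = 0) :
    ∀ i j, i + j = s → f.coeff i * g.coeff j = 0 := by
  intro i
  induction i using Nat.strong_induction_on with
  | _ i ih =>
  intro j hij
  have key : f.coeff i * g.coeff j * f.coeff i = 0 := by
    have hsum : ∑ p ∈ antidiagonal s, f.coeff p.1 * g.coeff p.2 * f.coeff i = 0 := by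
      rw [← sum_mul, ← coeff_mul, hs, zero_mul]
    rwa [sum_eq_single_of_mem (i, j) (mem_antidiagonal.mpr hij)] at hsum
    rintro ⟨i', j'⟩ hp hne
    rw [HasAntidiagonal.mem_antidiagonal] at hp
    have hi' : i' ≠ i := fun h => hne (by simp only [Prod.mk.injEq]; omega)
    rcases lt_or_gt_of_ne hi' with hlt | hgt
    · rw [ih i' hlt j' hp, zero_mul]
    · rw [mul_assoc, IsReduced.mul_eq_zero_symm (hlow i j' (by omega)), mul_zero]
  exact IsReduced.eq_zero_of_mul_self_eq_zero (by rw [← mul_assoc, key, zero_mul])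

theorem coeff_mul_eq_zero_iff_of_isReduced {f g : R[X]} {n : ℕ} :
    (∀ k < n, (f * g).coeff k = 0) ↔ ∀ i j, i + j < n → f.coeff i * g.coeff j = 0 := by
  refine ⟨fun h i j hij => ?_,
    fun h k hk => coeff_mul_eq_zero_of_forall fun i j hij => h i j (by omega)⟩
  induction hs : i + j using Nat.strong_induction_on generalizing i j with
  | _ s ih =>
    exact coeff_mul_coeff_eq_zero_of_coeff_mul_eq_zero (h s (hs ▸ hij))
      (fun i' j' h' => ih _ (hs ▸ h') i' j' (by omega) rfl) i j hs

end Polynomial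

theorem RingQuot.mkRingHom_eq_zero_iff_dvd {S : Type*} [Ring S] {z : S}
    (hz : z ∈ Set.center S) {a : S} :
    RingQuot.mkRingHom (fun p q => p = z ∧ q = 0) a = 0 ↔ z ∣ a := by
  refine ⟨fun ha => ?_, fun ⟨c, hc⟩ => ?_⟩
  · let I : TwoSidedIdeal S := .mk' {a | z ∣ a} (dvd_zero z) dvd_add dvd_neg.2
      (fun {x _} ⟨c, hc⟩ => ⟨x * c, by rw [hc, ← mul_assoc, ← mul_assoc, hz.comm]⟩)
      (fun {_ y} hx => dvd_mul_of_dvd_left hx y)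
    have hzI : ∀ ⦃p q : S⦄, p = z ∧ q = 0 → I.ringCon.mk' p = I.ringCon.mk' q := by
      rintro p q ⟨rfl, rfl⟩
      exact I.ringCon.eq.mpr ((I.rel_iff _ _).mpr (by simp [I]))
    have := congrArg (RingQuot.lift ⟨I.ringCon.mk', hzI⟩) ha
    rw [RingQuot.lift_mkRingHom_apply, map_zero, ← map_zero I.ringCon.mk'] at this
    simpa [I] using (I.rel_iff _ _).mp (I.ringCon.eq.mp this)
  · rw [hc, map_mul, RingQuot.mkRingHom_rel ⟨rfl, rfl⟩, map_zero, zero_mul]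

noncomputable abbrev TruncatedPolynomial (R : Type*) [Ring R] (n : ℕ) : Type _ :=
  RingQuot (fun p q : R[X] => p = X ^ n ∧ q = 0)

namespace TruncatedPolynomial

variable {R : Type*} [Ring R] {n : ℕ}

noncomputable abbrev mk (R : Type*) [Ring R] (n : ℕ) : R[X] →+* TruncatedPolynomial R n :=
  RingQuot.mkRingHom _

theorem mk_surjective : Function.Surjective (mk R n) :=
  RingQuot.mkRingHom_surjective _

theorem mk_eq_zero_iff {f : R[X]} : mk R n f = 0 ↔ ∀ k < n, f.coeff k = 0 :=
  (RingQuot.mkRingHom_eq_zero_iff_dvd (X_pow_mem_center n)).trans X_pow_dvd_iff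

theorem mk_C_mul_X_pow_eq_zero_iff {a : R} {m : ℕ} (hm : m < n) :
    mk R n (C a * X ^ m) = 0 ↔ a = 0 := by
  simp only [mk_eq_zero_iff, coeff_C_mul_X_pow]
  exact ⟨fun h => by simpa using h m hm, fun ha k _ => by simp [ha]⟩

theorem mk_X_pow_mem_center (m : ℕ) : mk R n (X ^ m) ∈ Set.center (TruncatedPolynomial R n) :=
  Semigroup.mem_center_iff.mpr fun q => by
    obtain ⟨p, rfl⟩ := mk_surjective q
    rw [← map_mul, ← map_mul, X_pow_mul]

theorem mk_mul_mk_eq_zero_iff [IsReduced R] {f g : R[X]} :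
    mk R n f * mk R n g = 0 ↔ ∀ i j, i + j < n → f.coeff i * g.coeff j = 0 := by
  rw [← map_mul, mk_eq_zero_iff, coeff_mul_eq_zero_iff_of_isReduced]

theorem linearArmendariz [IsReduced R] : LinearArmendariz (TruncatedPolynomial R n) := by
  intro α β γ δ h
  obtain ⟨hαγ, hmix, hβδ⟩ := linear_mul_linear_eq_zero_iff.mp h
  obtain ⟨A, rfl⟩ := mk_surjective α
  obtain ⟨B, rfl⟩ := mk_surjective β
  obtain ⟨C', rfl⟩ := mk_surjective γ
  obtain ⟨D, rfl⟩ := mk_surjective δ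
  have hsum : mk R n (A + B) * mk R n (C' + D) = 0 := by
    rw [map_add, map_add, add_mul, mul_add, mul_add, hαγ, hβδ, zero_add, add_zero, hmix]
  rw [mk_mul_mk_eq_zero_iff] at hαγ hβδ hsum
  have hcross : ∀ i j, i + j < n → A.coeff i * D.coeff j = 0 ∧ B.coeff i * C'.coeff j = 0 :=
    fun i j hij => IsReduced.mul_eq_zero_of_add_mul_add_eq_zero (hαγ i j hij) (hβδ i j hij)
      (by simpa only [coeff_add] using hsum i j hij)
  exact ⟨mk_mul_mk_eq_zero_iff.mpr hαγ, mk_mul_mk_eq_zero_iff.mpr fun i j h => (hcross i j h).1,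
    mk_mul_mk_eq_zero_iff.mpr fun i j h => (hcross i j h).2, mk_mul_mk_eq_zero_iff.mpr hβδ⟩

theorem mem_center_of_mul_self_eq_zero (hn : 2 ≤ n)
    (h : CentralLinearArmendariz (TruncatedPolynomial R n)) {x : R} (hx : x * x = 0) :
    x ∈ Set.center R := by
  set α := mk R n (C x)
  set ε := mk R n (X ^ (n - 1))
  have hε : ε ∈ Set.center _ := mk_X_pow_mem_center _
  have hα : α * α = 0 := by rw [← map_mul, ← C_mul, hx, C_0, map_zero]
  have hεε : ε * ε = 0 := by
    rw [← map_mul, ← pow_add, mk_eq_zero_iff]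
    intro k hk
    rw [coeff_X_pow, if_neg (by omega)]
  have hαε : α * ε ∈ Set.center (TruncatedPolynomial R n) := by
    simpa only [mul_add, hα, zero_add] using
      (h _ _ _ _ (Commute.linear_mul_linear_eq_zero (hε.comm α).symm hα hεε)).2.1
  refine Semigroup.mem_center_iff.mpr fun r => sub_eq_zero.mp <|
    (mk_C_mul_X_pow_eq_zero_iff (a := r * x - x * r) (by omega : n - 1 < n)).mp ?_
  have hεr := Semigroup.mem_center_iff.mp hε (mk R n (C r))
  calc mk R n (C (r * x - x * r) * X ^ (n - 1))
      = mk R n (C r) * (α * ε) - α * ε * mk R n (C r) := by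
        simp only [map_mul, map_sub]
        rw [sub_mul, mul_assoc, mul_assoc α, hεr, mul_assoc α ε]
    _ = 0 := by rw [Semigroup.mem_center_iff.mp hαε, sub_self]

end TruncatedPolynomial

theorem LinearArmendariz.centralLinearArmendariz {S : Type*} [Ring S] (h : LinearArmendariz S) :
    CentralLinearArmendariz S := fun a₀ a₁ b₀ b₁ hab => by
  obtain ⟨h₀₀, h₀₁, h₁₀, h₁₁⟩ := h a₀ a₁ b₀ b₁ hab
  simp only [h₀₀, h₀₁, h₁₀, h₁₁, Set.zero_mem_center, and_self]

/-- For a semiprime ring `R` and `n ≥ 2`, `R` is central reduced iff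
`R[x]/(xⁿ)` (the quotient of `R[x]` by the two-sided ideal generated by `xⁿ`)
is central linear Armendariz. -/
theorem stmt_19 (R : Type*) [Ring R] (n : ℕ) (hn : 2 ≤ n)
    (hsp : ∀ a : R, (∀ r : R, a * r * a = 0) → a = 0) :
    (∀ a : R, IsNilpotent a → a ∈ Set.center R) ↔
      CentralLinearArmendariz
        (RingQuot (fun p q : Polynomial R => p = Polynomial.X ^ n ∧ q = 0)) := by
  constructor
  · intro hcr
    have : IsReduced R :=
      (isReduced_iff_of_semiprime hsp).mpr fun x hx => hcr x ⟨2, by rw [sq, hx]⟩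
    exact TruncatedPolynomial.linearArmendariz.centralLinearArmendariz
  · intro hcla
    have : IsReduced R := (isReduced_iff_of_semiprime hsp).mpr fun x hx =>
      TruncatedPolynomial.mem_center_of_mul_self_eq_zero hn hcla hx
    exact fun a ha => ha.eq_zero ▸ Set.zero_mem_center
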